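/- arXiv:1507.03450 — 4 statements merged into one kernel-verified Lean document; each statement's English description precedes it below -/
import Mathlib

section
/- Every point of the surface D_3: Δ_3 = 0 in P^3 has multiplicity at most 2, where Δ_3 = b^2c^2 - 4ac^3 - 4b^3d + 18abcd - 27a^2d^2. Equivalently, at the point [0:0:0:1] (corresponding to y^3) the polynomial Δ_3, written in local affine coordinates with d = 1, has a nonzero quadratic part (its lowest-degree homogeneous part has degree 2). -/
/-!
With `d = 1` the discriminant splits as `-27a² + (18abc - 4b³) + (b²c² - 4ac³)`, a sum of
homogeneous polynomials of degrees `2`, `3` and `4`, so its components of degree `0` and `1`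
vanish and its component of degree `2` is `-27a² ≠ 0`.
-/

open MvPolynomial

theorem MvPolynomial.homogeneousComponent_add_of_isHomogeneous_of_ne {σ R : Type*}
    [CommSemiring R] {φ ψ : MvPolynomial σ R} {m n : ℕ} (hψ : ψ.IsHomogeneous m) (hnm : n ≠ m) :
    homogeneousComponent n (φ + ψ) = homogeneousComponent n φ := by
  rw [map_add, homogeneousComponent_of_mem hψ, if_neg hnm, add_zero]

/-- Every point of the surface `𝒟₃ : Δ₃ = 0` has multiplicity at most `2`: at the point
`[0:0:0:1]` (the cube `y³`), the discriminant `Δ₃`, written in affine coordinates with `d = 1`,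
has lowest-degree homogeneous part of degree exactly `2`. -/
theorem stmt9 (P : MvPolynomial (Fin 3) ℂ)
    -- `Δ₃` with `d = 1`, in affine coordinates `(a, b, c)` centered at the point `y³`
    (hP : P = X 1 ^ 2 * X 2 ^ 2 - 4 * X 0 * X 2 ^ 3 - 4 * X 1 ^ 3 + 18 * X 0 * X 1 * X 2 -
      27 * X 0 ^ 2) :
    homogeneousComponent 0 P = 0 ∧ homogeneousComponent 1 P = 0 ∧
      homogeneousComponent 2 P ≠ 0 := by
  set quadratic : MvPolynomial (Fin 3) ℂ := C (-27) * X 0 ^ 2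
  have h2 : quadratic.IsHomogeneous 2 := isHomogeneous_C_mul_X_pow _ _ _
  have h3 : (C 18 * (X 0 * X 1 * X 2) - C 4 * X 1 ^ 3 : MvPolynomial (Fin 3) ℂ).IsHomogeneous 3 :=
    ((((isHomogeneous_X _ _).mul (isHomogeneous_X _ _)).mul (isHomogeneous_X _ _)).C_mul _).sub
      (isHomogeneous_C_mul_X_pow _ _ _)
  have h4 : (X 1 ^ 2 * X 2 ^ 2 - C 4 * (X 0 * X 2 ^ 3) : MvPolynomial (Fin 3) ℂ).IsHomogeneous 4 :=
    ((isHomogeneous_X_pow _ _).mul (isHomogeneous_X_pow _ _)).sub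
      (((isHomogeneous_X _ _).mul (isHomogeneous_X_pow _ _)).C_mul _)
  have hdecomp : P = quadratic + (C 18 * (X 0 * X 1 * X 2) - C 4 * X 1 ^ 3) +
      (X 1 ^ 2 * X 2 ^ 2 - C 4 * (X 0 * X 2 ^ 3)) := by
    simp only [hP, quadratic, map_neg, map_ofNat]
    ring
  have hlow : ∀ n ≤ 2, homogeneousComponent n P = if n = 2 then quadratic else 0 := by
    intro n hn
    rw [hdecomp, homogeneousComponent_add_of_isHomogeneous_of_ne h4 (by omega),
      homogeneousComponent_add_of_isHomogeneous_of_ne h3 (by omega), homogeneousComponent_of_mem h2]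
  refine ⟨hlow 0 (by norm_num), hlow 1 (by norm_num), ?_⟩
  rw [hlow 2 le_rfl, if_pos rfl]
  simp [quadratic]
end

section
/- For the polynomial f = x^{d-1}z + y^d + x^{d-2}yw + x^{d-5}y^5 ∈ C[x,y,z,w] with d ≥ 10, the vector r_2 = (x^4, 0, -(d-1)x^3z - (d-2)x^2yw, -(d-5)y^4) is a syzygy of the partial derivatives of f, i.e., x^4·f_x + 0·f_y + (-(d-1)x^3z - (d-2)x^2yw)·f_z + (-(d-5)y^4)·f_w = 0. -/
/-! The Euler operator `x ∂ₓ` multiplies each monomial by its `x`-degree, so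
`x⁴ f_x = x³ (x ∂ₓ f)` can be read off term by term, while `f_z = x^{d-1}` and
`f_w = x^{d-2} y` are monomials; the syzygy is then a polynomial identity. -/

open MvPolynomial

theorem X_mul_pderiv_X_pow {σ R : Type*} [CommSemiring R] (i : σ) (m : ℕ) :
    X i * pderiv i (X i ^ m : MvPolynomial σ R) = (m : MvPolynomial σ R) * X i ^ m := by
  cases m with
  | zero => simp
  | succ m => rw [pderiv_pow, pderiv_X_self]; push_cast; ring

section

variable {R : Type*} [CommRing R]

/-- The polynomial `f` of degree `d = n + 5`, indexed by `n` so that no exponent is a truncated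
subtraction. -/
noncomputable def surfacePoly (n : ℕ) : MvPolynomial (Fin 4) R :=
  X 0 ^ (n + 4) * X 2 + X 1 ^ (n + 5) + X 0 ^ (n + 3) * X 1 * X 3 + X 0 ^ n * X 1 ^ 5

theorem pderiv_two_surfacePoly (n : ℕ) :
    pderiv 2 (surfacePoly n : MvPolynomial (Fin 4) R) = X 0 ^ (n + 4) := by
  simp [surfacePoly]

theorem pderiv_three_surfacePoly (n : ℕ) :
    pderiv 3 (surfacePoly n : MvPolynomial (Fin 4) R) = X 0 ^ (n + 3) * X 1 := by
  simp [surfacePoly]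

theorem X_zero_mul_pderiv_zero_surfacePoly (n : ℕ) :
    X 0 * pderiv 0 (surfacePoly n : MvPolynomial (Fin 4) R) =
      (n + 4 : MvPolynomial (Fin 4) R) * X 0 ^ (n + 4) * X 2 +
        (n + 3 : MvPolynomial (Fin 4) R) * X 0 ^ (n + 3) * X 1 * X 3 +
        (n : MvPolynomial (Fin 4) R) * X 0 ^ n * X 1 ^ 5 := by
  have h4 := X_mul_pderiv_X_pow (R := R) (0 : Fin 4) (n + 4)
  have h3 := X_mul_pderiv_X_pow (R := R) (0 : Fin 4) (n + 3)
  have h0 := X_mul_pderiv_X_pow (R := R) (0 : Fin 4) n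
  have hy : ∀ k, pderiv 0 (X 1 ^ k : MvPolynomial (Fin 4) R) = 0 := by simp
  simp only [surfacePoly, map_add, Derivation.leibniz, smul_eq_mul, hy,
    pderiv_X_of_ne (show (1 : Fin 4) ≠ 0 by decide),
    pderiv_X_of_ne (show (2 : Fin 4) ≠ 0 by decide),
    pderiv_X_of_ne (show (3 : Fin 4) ≠ 0 by decide)]
  push_cast at h4 h3
  linear_combination X 2 * h4 + X 1 * X 3 * h3 + X 1 ^ 5 * h0

theorem surfacePoly_syzygy (n : ℕ) :
    X 0 ^ 4 * pderiv 0 (surfacePoly n : MvPolynomial (Fin 4) R) +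
      (-((n + 4 : MvPolynomial (Fin 4) R) * X 0 ^ 3 * X 2) -
        (n + 3 : MvPolynomial (Fin 4) R) * X 0 ^ 2 * X 1 * X 3) * pderiv 2 (surfacePoly n) -
      (n : MvPolynomial (Fin 4) R) * X 1 ^ 4 * pderiv 3 (surfacePoly n) = 0 := by
  rw [pderiv_two_surfacePoly, pderiv_three_surfacePoly,
    show (X 0 ^ 4 : MvPolynomial (Fin 4) R) = X 0 ^ 3 * X 0 by ring, mul_assoc,
    X_zero_mul_pderiv_zero_surfacePoly]
  ring

end

/-- For `f = x^{d-1}z + y^d + x^{d-2}yw + x^{d-5}y⁵` with `d ≥ 10`, the vector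
`r₂ = (x⁴, 0, -(d-1)x³z - (d-2)x²yw, -(d-5)y⁴)` is a syzygy of the partial derivatives of
`f` (variables `x, y, z, w` are `X 0, X 1, X 2, X 3`). -/
theorem stmt10 (d : ℕ) (hd : 10 ≤ d) (f : MvPolynomial (Fin 4) ℂ)
    (hf : f = X 0 ^ (d - 1) * X 2 + X 1 ^ d + X 0 ^ (d - 2) * X 1 * X 3 +
      X 0 ^ (d - 5) * X 1 ^ 5) :
    X 0 ^ 4 * pderiv 0 f + 0 * pderiv 1 f +
      (-(C ((d : ℂ) - 1) * X 0 ^ 3 * X 2) - C ((d : ℂ) - 2) * X 0 ^ 2 * X 1 * X 3) *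
        pderiv 2 f +
      (-(C ((d : ℂ) - 5) * X 1 ^ 4)) * pderiv 3 f = 0 := by
  obtain ⟨n, rfl⟩ := Nat.exists_eq_add_of_le' (by omega : 5 ≤ d)
  obtain rfl : f = surfacePoly n := by rw [hf, surfacePoly]; congr 3
  have hsyz := surfacePoly_syzygy (R := ℂ) n
  simp only [map_sub, map_natCast, map_ofNat, map_one]
  push_cast
  linear_combination hsyz
end

section
/- Let 1 ≤ d_1 ≤ d_2 ≤ d_3 with d_1 + d_2 + d_3 = d - 1. Then for all integers k ≥ d + d_3 - 4, the alternating sum C(k+3,3) - 4C(k+4-d,3) + Σ_{j=1}^{3} C(k+4-d-d_j,3) equals ak + b where a = s_1^2 - s_2 and b = 2a - s_1^3 + (3/2)s_1s_2 - (1/2)s_3, with s_1, s_2, s_3 the elementary symmetric functions of d_1, d_2, d_3. -/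
/-- `C(m,3) = m(m-1)(m-2)/6`, extended polynomially to all rationals. -/
def binom3 (m : ℚ) : ℚ := m * (m - 1) * (m - 2) / 6

/- The `k³` and `k²` coefficients cancel: the weights `1, -4, 1, 1, 1` sum to `0`, and so does
their pairing with the shifts `0, s₁, s₁ + x, s₁ + y, s₁ + z`. -/
theorem binom3_resolution_sum (x y z k : ℚ) :
    binom3 (k + 3) - 4 * binom3 (k + 3 - (x + y + z)) + binom3 (k + 3 - (x + y + z) - x) +
        binom3 (k + 3 - (x + y + z) - y) + binom3 (k + 3 - (x + y + z) - z) =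
      ((x + y + z) ^ 2 - (x * y + x * z + y * z)) * k +
        (2 * ((x + y + z) ^ 2 - (x * y + x * z + y * z)) - (x + y + z) ^ 3 +
          3 / 2 * (x + y + z) * (x * y + x * z + y * z) - 1 / 2 * (x * y * z)) := by
  simp only [binom3]
  ring

theorem stmt15_general (d d₁ d₂ d₃ : ℕ)
    (hsum : d₁ + d₂ + d₃ + 1 = d)
    (s₁ s₂ s₃ a b : ℚ) (hs₁ : s₁ = d₁ + d₂ + d₃)
    (hs₂ : s₂ = d₁ * d₂ + d₁ * d₃ + d₂ * d₃) (hs₃ : s₃ = d₁ * d₂ * d₃)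
    (ha : a = s₁ ^ 2 - s₂) (hb : b = 2 * a - s₁ ^ 3 + 3 / 2 * s₁ * s₂ - 1 / 2 * s₃) :
    ∀ k : ℤ, (d : ℤ) + d₃ - 4 ≤ k →
      binom3 (k + 3) - 4 * binom3 (k + 4 - d) + binom3 (k + 4 - d - d₁) +
        binom3 (k + 4 - d - d₂) + binom3 (k + 4 - d - d₃) = a * k + b := by
  intro k _
  have hd : (k + 4 - d : ℚ) = k + 3 - (d₁ + d₂ + d₃) := by
    rw [← hsum]
    push_cast
    ring
  rw [hd, binom3_resolution_sum, hb, ha, hs₁, hs₂, hs₃]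

/-- The Hilbert polynomial of a free surface of degree `d` in `ℙ³` with exponents
`1 ≤ d₁ ≤ d₂ ≤ d₃`, `d₁ + d₂ + d₃ = d - 1`: for all `k ≥ d + d₃ - 4`,
`C(k+3,3) - 4C(k+4-d,3) + ∑ⱼ C(k+4-d-dⱼ,3) = ak + b` with `a = s₁² - s₂` and
`b = 2a - s₁³ + (3/2)s₁s₂ - (1/2)s₃`. -/
theorem stmt15 (d d₁ d₂ d₃ : ℕ) (h1 : 1 ≤ d₁) (h12 : d₁ ≤ d₂) (h23 : d₂ ≤ d₃)
    (hsum : d₁ + d₂ + d₃ + 1 = d)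
    (s₁ s₂ s₃ a b : ℚ) (hs₁ : s₁ = d₁ + d₂ + d₃)
    (hs₂ : s₂ = d₁ * d₂ + d₁ * d₃ + d₂ * d₃) (hs₃ : s₃ = d₁ * d₂ * d₃)
    (ha : a = s₁ ^ 2 - s₂) (hb : b = 2 * a - s₁ ^ 3 + 3 / 2 * s₁ * s₂ - 1 / 2 * s₃) :
    ∀ k : ℤ, (d : ℤ) + d₃ - 4 ≤ k →
      binom3 (k + 3) - 4 * binom3 (k + 4 - d) + binom3 (k + 4 - d - d₁) +
        binom3 (k + 4 - d - d₂) + binom3 (k + 4 - d - d₃) = a * k + b :=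
  stmt15_general d d₁ d₂ d₃ hsum s₁ s₂ s₃ a b hs₁ hs₂ hs₃ ha hb
end

section
/- Let 1 ≤ d_1 ≤ d_2 ≤ d_3 with d_1 + d_2 + d_3 = d (nearly free case), and set d'_1 = d_1, d'_2 = d_2, d'_3 = d_3 - 1, with a' = s'_1^2 - s'_2 and b' = 2a' - s'_1^3 + (3/2)s'_1 s'_2 - (1/2)s'_3 computed from the elementary symmetric functions s'_i of (d'_1, d'_2, d'_3). Then for all integers k ≥ d + d_3 - 3, C(k+3,3) - 4C(k+4-d,3) + C(k+4-d-d_1,3) + C(k+4-d-d_2,3) + 2C(k+4-d-d_3,3) - C(k+3-d-d_3,3) = (a'-1)k + (b' + d + d_3 - 3). -/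
theorem stmt19_general (d d₁ d₂ d₃ : ℕ)
    (hsum : d₁ + d₂ + d₃ = d)
    (s₁' s₂' s₃' a' b' : ℚ) (hs₁ : s₁' = (d₁ : ℚ) + d₂ + ((d₃ : ℚ) - 1))
    (hs₂ : s₂' = (d₁ : ℚ) * d₂ + d₁ * ((d₃ : ℚ) - 1) + d₂ * ((d₃ : ℚ) - 1))
    (hs₃ : s₃' = (d₁ : ℚ) * d₂ * ((d₃ : ℚ) - 1))
    (ha : a' = s₁' ^ 2 - s₂')
    (hb : b' = 2 * a' - s₁' ^ 3 + 3 / 2 * s₁' * s₂' - 1 / 2 * s₃') :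
    ∀ k : ℤ, (d : ℤ) + d₃ - 3 ≤ k →
      binom3 (k + 3) - 4 * binom3 (k + 4 - d) + binom3 (k + 4 - d - d₁) +
        binom3 (k + 4 - d - d₂) + 2 * binom3 (k + 4 - d - d₃) - binom3 (k + 3 - d - d₃) =
      (a' - 1) * k + (b' + d + d₃ - 3) := by
  subst hsum hs₁ hs₂ hs₃ ha hb
  intro k _
  simp only [binom3]
  push_cast
  ring

/-- The Hilbert polynomial of a nearly free surface with exponents `1 ≤ d₁ ≤ d₂ ≤ d₃`,
`d₁ + d₂ + d₃ = d`: with `d'₁ = d₁`, `d'₂ = d₂`, `d'₃ = d₃ - 1` and `a', b'` the free-case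
values computed from the elementary symmetric functions of `(d'₁, d'₂, d'₃)`, one has, for
all `k ≥ d + d₃ - 3`,
`C(k+3,3) - 4C(k+4-d,3) + C(k+4-d-d₁,3) + C(k+4-d-d₂,3) + 2C(k+4-d-d₃,3) - C(k+3-d-d₃,3)`
`= (a'-1)k + (b' + d + d₃ - 3)`. -/
theorem stmt19 (d d₁ d₂ d₃ : ℕ) (h1 : 1 ≤ d₁) (h12 : d₁ ≤ d₂) (h23 : d₂ ≤ d₃)
    (hsum : d₁ + d₂ + d₃ = d)
    (s₁' s₂' s₃' a' b' : ℚ) (hs₁ : s₁' = (d₁ : ℚ) + d₂ + ((d₃ : ℚ) - 1))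
    (hs₂ : s₂' = (d₁ : ℚ) * d₂ + d₁ * ((d₃ : ℚ) - 1) + d₂ * ((d₃ : ℚ) - 1))
    (hs₃ : s₃' = (d₁ : ℚ) * d₂ * ((d₃ : ℚ) - 1))
    (ha : a' = s₁' ^ 2 - s₂')
    (hb : b' = 2 * a' - s₁' ^ 3 + 3 / 2 * s₁' * s₂' - 1 / 2 * s₃') :
    ∀ k : ℤ, (d : ℤ) + d₃ - 3 ≤ k →
      binom3 (k + 3) - 4 * binom3 (k + 4 - d) + binom3 (k + 4 - d - d₁) +
        binom3 (k + 4 - d - d₂) + 2 * binom3 (k + 4 - d - d₃) - binom3 (k + 3 - d - d₃) =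
      (a' - 1) * k + (b' + d + d₃ - 3) :=
  stmt19_general d d₁ d₂ d₃ hsum s₁' s₂' s₃' a' b' hs₁ hs₂ hs₃ ha hb
end
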